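/- arXiv:1801.00480 — 7 statements merged into one kernel-verified Lean document; each statement's English description precedes it below -/
import Mathlib

section
/- If h₁ is c₁-averaged and h₂ is c₂-averaged with c₁, c₂ ∈ (0,1), then the composition h₁h₂ is (c₁ + c₂ - c₁c₂)-averaged. -/
/-!
Write `hᵢ = (1 - cᵢ) • id + cᵢ • Nᵢ` and `c = c₁ + c₂ - c₁ c₂`, so that `1 - c = (1 - c₁)(1 - c₂)`.
Expanding `h₁ ∘ h₂` gives `(1 - c) • id + (1 - c₁) c₂ • N₂ + c₁ • N₁ ∘ h₂`, and since
`(1 - c₁) c₂ + c₁ = c`, the operator `N = ((1 - c₁) c₂ / c) • N₂ + (c₁ / c) • N₁ ∘ h₂` is a convex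
combination of nonexpansive maps (`h₂` is nonexpansive, being averaged).
-/

section Averaged

variable {E : Type*} [NormedAddCommGroup E] [NormedSpace ℝ E]

def IsAveraged (c : ℝ) (h : E → E) : Prop :=
  ∃ N : E → E, LipschitzWith 1 N ∧ ∀ x, h x = (1 - c) • x + c • N x

theorem isAveraged_iff_norm_sub_le {c : ℝ} {h : E → E} : IsAveraged c h ↔
    ∃ N : E → E, (∀ x y : E, ‖N x - N y‖ ≤ ‖x - y‖) ∧ ∀ x, h x = (1 - c) • x + c • N x := by
  simp only [IsAveraged, lipschitzWith_iff_norm_sub_le, NNReal.coe_one, one_mul]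

theorem LipschitzWith.smul_add_smul_of_add_le_one {α : Type*} [PseudoEMetricSpace α]
    {f g : α → E} (hf : LipschitzWith 1 f) (hg : LipschitzWith 1 g) {a b : ℝ}
    (ha : 0 ≤ a) (hb : 0 ≤ b) (hab : a + b ≤ 1) :
    LipschitzWith 1 fun x => a • f x + b • g x := by
  refine (((lipschitzWith_smul a).comp hf).add ((lipschitzWith_smul b).comp hg)).weaken ?_
  rw [← NNReal.coe_le_coe]
  simp [abs_of_nonneg ha, abs_of_nonneg hb, hab]

theorem IsAveraged.lipschitzWith_one {c : ℝ} {h : E → E} (hh : IsAveraged c h)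
    (hc : c ∈ Set.Icc (0 : ℝ) 1) : LipschitzWith 1 h := by
  obtain ⟨N, hN, rfl⟩ : ∃ N, LipschitzWith 1 N ∧ h = fun x => (1 - c) • x + c • N x := by
    obtain ⟨N, hN, hhN⟩ := hh
    exact ⟨N, hN, funext hhN⟩
  exact LipschitzWith.id.smul_add_smul_of_add_le_one hN (sub_nonneg.2 hc.2) hc.1 (by simp)

theorem IsAveraged.comp {c₁ c₂ : ℝ} {h₁ h₂ : E → E} (hh₁ : IsAveraged c₁ h₁)
    (hh₂ : IsAveraged c₂ h₂) (hc₁ : c₁ ∈ Set.Icc (0 : ℝ) 1) (hc₂ : c₂ ∈ Set.Icc (0 : ℝ) 1) :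
    IsAveraged (c₁ + c₂ - c₁ * c₂) (h₁ ∘ h₂) := by
  obtain ⟨N₁, hN₁, hh₁N⟩ := hh₁
  obtain ⟨N₂, hN₂, hh₂N⟩ := hh₂
  obtain ⟨hc₁0, hc₁1⟩ := hc₁
  obtain ⟨hc₂0, hc₂1⟩ := hc₂
  set c := c₁ + c₂ - c₁ * c₂
  -- `c = 0` forces `c₁ = c₂ = 0`; then both weights below are `0` and the identities still hold.
  have hc_eq_zero : c = 0 → c₁ = 0 ∧ (1 - c₁) * c₂ = 0 := fun hc0 => by
    constructor <;>
      nlinarith [mul_nonneg hc₁0 (sub_nonneg.2 hc₂1), mul_nonneg hc₂0 (sub_nonneg.2 hc₁1)]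
  have hc_nonneg : 0 ≤ c := by nlinarith [mul_nonneg hc₁0 (sub_nonneg.2 hc₂1)]
  have hweights : (1 - c₁) * c₂ / c + c₁ / c ≤ 1 := by
    rw [← add_div, show (1 - c₁) * c₂ + c₁ = c by ring]
    exact div_self_le_one c
  have hh₂_lip : LipschitzWith 1 h₂ := IsAveraged.lipschitzWith_one ⟨N₂, hN₂, hh₂N⟩ ⟨hc₂0, hc₂1⟩
  refine ⟨fun x => ((1 - c₁) * c₂ / c) • N₂ x + (c₁ / c) • N₁ (h₂ x),
    hN₂.smul_add_smul_of_add_le_one ((hN₁.comp hh₂_lip).weaken (mul_one 1).le)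
      (div_nonneg (mul_nonneg (sub_nonneg.2 hc₁1) hc₂0) hc_nonneg) (div_nonneg hc₁0 hc_nonneg)
      hweights, fun x => ?_⟩
  have hscaled : c • (((1 - c₁) * c₂ / c) • N₂ x + (c₁ / c) • N₁ (h₂ x))
      = ((1 - c₁) * c₂) • N₂ x + c₁ • N₁ (h₂ x) := by
    rw [smul_add, smul_smul, smul_smul, mul_div_cancel_of_imp' fun hc0 => (hc_eq_zero hc0).2,
      mul_div_cancel_of_imp' fun hc0 => (hc_eq_zero hc0).1]
  rw [Function.comp_apply, hscaled, hh₁N, hh₂N]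
  module

end Averaged

theorem averaged_comp_general
    {H : Type*} [NormedAddCommGroup H] [InnerProductSpace ℝ H]
    (h₁ h₂ : H → H) (c₁ c₂ : ℝ) (hc₁ : c₁ ∈ Set.Ioo (0 : ℝ) 1) (hc₂ : c₂ ∈ Set.Ioo (0 : ℝ) 1)
    (H₁ : ∃ N : H → H, (∀ x y : H, ‖N x - N y‖ ≤ ‖x - y‖) ∧
      ∀ x : H, h₁ x = (1 - c₁) • x + c₁ • N x)
    (H₂ : ∃ N : H → H, (∀ x y : H, ‖N x - N y‖ ≤ ‖x - y‖) ∧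
      ∀ x : H, h₂ x = (1 - c₂) • x + c₂ • N x) :
    ∃ N : H → H, (∀ x y : H, ‖N x - N y‖ ≤ ‖x - y‖) ∧
      ∀ x : H, (h₁ ∘ h₂) x = (1 - (c₁ + c₂ - c₁ * c₂)) • x + (c₁ + c₂ - c₁ * c₂) • N x := by
  rw [← isAveraged_iff_norm_sub_le] at H₁ H₂ ⊢
  exact H₁.comp H₂ (Set.Ioo_subset_Icc_self hc₁) (Set.Ioo_subset_Icc_self hc₂)

/-- If `h₁` is `c₁`-averaged and `h₂` is `c₂`-averaged, then `h₁ ∘ h₂` is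
`(c₁ + c₂ - c₁ * c₂)`-averaged. -/
theorem averaged_comp
    {H : Type*} [NormedAddCommGroup H] [InnerProductSpace ℝ H] [CompleteSpace H]
    (h₁ h₂ : H → H) (c₁ c₂ : ℝ) (hc₁ : c₁ ∈ Set.Ioo (0 : ℝ) 1) (hc₂ : c₂ ∈ Set.Ioo (0 : ℝ) 1)
    (H₁ : ∃ N : H → H, (∀ x y : H, ‖N x - N y‖ ≤ ‖x - y‖) ∧
      ∀ x : H, h₁ x = (1 - c₁) • x + c₁ • N x)
    (H₂ : ∃ N : H → H, (∀ x y : H, ‖N x - N y‖ ≤ ‖x - y‖) ∧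
      ∀ x : H, h₂ x = (1 - c₂) • x + c₂ • N x) :
    ∃ N : H → H, (∀ x y : H, ‖N x - N y‖ ≤ ‖x - y‖) ∧
      ∀ x : H, (h₁ ∘ h₂) x = (1 - (c₁ + c₂ - c₁ * c₂)) • x + (c₁ + c₂ - c₁ * c₂) • N x :=
  averaged_comp_general h₁ h₂ c₁ c₂ hc₁ hc₂ H₁ H₂
end

section
/- If h₁ and h₂ are averaged operators on a real Hilbert space with Fix(h₁) ∩ Fix(h₂) ≠ ∅, then Fix(h₁h₂) = Fix(h₁) ∩ Fix(h₂). -/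
/-!
An averaged map `h = (1 - c) • id + c • N` contracts squared distances by an extra
`(1 - c) / c * ‖(x - h x) - (y - h y)‖ ^ 2`. If `x = h₁ (h₂ x)` and `z` is a common fixed point,
then `‖x - z‖ ≤ ‖h₂ x - z‖` because `h₁` does not move points away from `z`, whereas `h₂` moves
`x` strictly closer to `z` unless `h₂ x = x`. Hence `h₂ x = x`, and then `h₁ x = x`.
-/

open RealInnerProductSpace Function

section Averaged

variable {H : Type*} [NormedAddCommGroup H] [InnerProductSpace ℝ H]

theorem norm_one_sub_smul_add_smul_sq_add (c : ℝ) (a b : H) :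
    ‖(1 - c) • a + c • b‖ ^ 2 + c * (1 - c) * ‖a - b‖ ^ 2 = (1 - c) * ‖a‖ ^ 2 + c * ‖b‖ ^ 2 := by
  simp only [← real_inner_self_eq_norm_sq, inner_add_left, inner_add_right, inner_sub_left,
    inner_sub_right, real_inner_smul_left, real_inner_smul_right, real_inner_comm a b]
  ring

theorem averaged_norm_sub_sq_add_le {c : ℝ} (hc : c ∈ Set.Ioo (0 : ℝ) 1) {h N : H → H}
    (hN : ∀ x y : H, ‖N x - N y‖ ≤ ‖x - y‖) (hh : ∀ x : H, h x = (1 - c) • x + c • N x)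
    (x y : H) :
    ‖h x - h y‖ ^ 2 + (1 - c) / c * ‖(x - h x) - (y - h y)‖ ^ 2 ≤ ‖x - y‖ ^ 2 := by
  obtain ⟨hc0, hc1⟩ := hc
  have h_sub : h x - h y = (1 - c) • (x - y) + c • (N x - N y) := by
    rw [hh, hh]; module
  have h_disp : (x - h x) - (y - h y) = c • ((x - y) - (N x - N y)) := by
    rw [hh, hh]; module
  have h_N : ‖N x - N y‖ ^ 2 ≤ ‖x - y‖ ^ 2 := by gcongr; exact hN x y
  have h_id := norm_one_sub_smul_add_smul_sq_add c (x - y) (N x - N y)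
  rw [h_sub, h_disp, norm_smul, Real.norm_of_nonneg hc0.le, mul_pow,
    show (1 - c) / c * (c ^ 2 * ‖(x - y) - (N x - N y)‖ ^ 2)
      = c * (1 - c) * ‖(x - y) - (N x - N y)‖ ^ 2 by field_simp]
  nlinarith

theorem averaged_norm_sub_fixedPt_sq_add_le {c : ℝ} (hc : c ∈ Set.Ioo (0 : ℝ) 1) {h N : H → H}
    (hN : ∀ x y : H, ‖N x - N y‖ ≤ ‖x - y‖) (hh : ∀ x : H, h x = (1 - c) • x + c • N x)
    {z : H} (hz : IsFixedPt h z) (x : H) :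
    ‖h x - z‖ ^ 2 + (1 - c) / c * ‖x - h x‖ ^ 2 ≤ ‖x - z‖ ^ 2 := by
  simpa [hz.eq] using averaged_norm_sub_sq_add_le hc hN hh x z

theorem averaged_norm_sub_fixedPt_le {c : ℝ} (hc : c ∈ Set.Ioo (0 : ℝ) 1) {h N : H → H}
    (hN : ∀ x y : H, ‖N x - N y‖ ≤ ‖x - y‖) (hh : ∀ x : H, h x = (1 - c) • x + c • N x)
    {z : H} (hz : IsFixedPt h z) (x : H) : ‖h x - z‖ ≤ ‖x - z‖ := by
  have h_sq := averaged_norm_sub_fixedPt_sq_add_le hc hN hh hz x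
  have h_coef : 0 ≤ (1 - c) / c := div_nonneg (by linarith [hc.2]) hc.1.le
  exact le_of_sq_le_sq (by nlinarith [sq_nonneg ‖x - h x‖]) (norm_nonneg _)

end Averaged

theorem Function.IsFixedPt.of_comp_of_norm_sub_sq_add_le {H : Type*} [NormedAddCommGroup H]
    {h₁ h₂ : H → H} {x z : H} (hx : IsFixedPt (h₁ ∘ h₂) x) {k : ℝ} (hk : 0 < k)
    (h₁z : ∀ y, ‖h₁ y - z‖ ≤ ‖y - z‖)
    (h₂z : ∀ y, ‖h₂ y - z‖ ^ 2 + k * ‖y - h₂ y‖ ^ 2 ≤ ‖y - z‖ ^ 2) : IsFixedPt h₂ x := by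
  have h_closer : ‖x - z‖ ^ 2 ≤ ‖h₂ x - z‖ ^ 2 := by
    gcongr
    simpa only [show h₁ (h₂ x) = x from hx] using h₁z (h₂ x)
  have h_disp : ‖x - h₂ x‖ ^ 2 = 0 := by
    nlinarith [h₂z x, sq_nonneg ‖x - h₂ x‖]
  rw [sq_eq_zero_iff, norm_eq_zero, sub_eq_zero] at h_disp
  exact h_disp.symm

theorem fixedPoints_comp_of_averaged_general
    {H : Type*} [NormedAddCommGroup H] [InnerProductSpace ℝ H]
    (h₁ h₂ : H → H)
    (H₁ : ∃ c ∈ Set.Ioo (0 : ℝ) 1, ∃ N : H → H, (∀ x y : H, ‖N x - N y‖ ≤ ‖x - y‖) ∧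
      ∀ x : H, h₁ x = (1 - c) • x + c • N x)
    (H₂ : ∃ c ∈ Set.Ioo (0 : ℝ) 1, ∃ N : H → H, (∀ x y : H, ‖N x - N y‖ ≤ ‖x - y‖) ∧
      ∀ x : H, h₂ x = (1 - c) • x + c • N x)
    (hfix : (Function.fixedPoints h₁ ∩ Function.fixedPoints h₂).Nonempty) :
    Function.fixedPoints (h₁ ∘ h₂) = Function.fixedPoints h₁ ∩ Function.fixedPoints h₂ := by
  obtain ⟨c₁, hc₁, N₁, hN₁, hh₁⟩ := H₁
  obtain ⟨c₂, hc₂, N₂, hN₂, hh₂⟩ := H₂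
  obtain ⟨z, hz₁, hz₂⟩ := hfix
  refine Set.Subset.antisymm (fun x hx => ?_) fun x ⟨hx₁, hx₂⟩ => hx₁.comp hx₂
  have hx₂ : IsFixedPt h₂ x :=
    hx.of_comp_of_norm_sub_sq_add_le (div_pos (by linarith [hc₂.2]) hc₂.1)
      (averaged_norm_sub_fixedPt_le hc₁ hN₁ hh₁ hz₁)
      (averaged_norm_sub_fixedPt_sq_add_le hc₂ hN₂ hh₂ hz₂)
  exact ⟨by simpa [IsFixedPt, hx₂.eq] using hx.eq, hx₂⟩

/-- If `h₁` and `h₂` are averaged operators on a real Hilbert space with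
`Fix(h₁) ∩ Fix(h₂) ≠ ∅`, then `Fix(h₁ ∘ h₂) = Fix(h₁) ∩ Fix(h₂)`. -/
theorem fixedPoints_comp_of_averaged
    {H : Type*} [NormedAddCommGroup H] [InnerProductSpace ℝ H] [CompleteSpace H]
    (h₁ h₂ : H → H)
    (H₁ : ∃ c ∈ Set.Ioo (0 : ℝ) 1, ∃ N : H → H, (∀ x y : H, ‖N x - N y‖ ≤ ‖x - y‖) ∧
      ∀ x : H, h₁ x = (1 - c) • x + c • N x)
    (H₂ : ∃ c ∈ Set.Ioo (0 : ℝ) 1, ∃ N : H → H, (∀ x y : H, ‖N x - N y‖ ≤ ‖x - y‖) ∧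
      ∀ x : H, h₂ x = (1 - c) • x + c • N x)
    (hfix : (Function.fixedPoints h₁ ∩ Function.fixedPoints h₂).Nonempty) :
    Function.fixedPoints (h₁ ∘ h₂) = Function.fixedPoints h₁ ∩ Function.fixedPoints h₂ :=
  fixedPoints_comp_of_averaged_general h₁ h₂ H₁ H₂ hfix
end

section
/- If h₁ and h₂ are averaged operators with Fix(h₁) ∩ Fix(h₂) ≠ ∅, and w₁, w₂ ∈ (0,1) with w₁ + w₂ = 1, then Fix(w₁h₁ + w₂h₂) = Fix(h₁) ∩ Fix(h₂). -/
/-!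
An averaged operator `h = (1 - c) Id + c N` with a fixed point `y` is quasi-nonexpansive about `y`,
since `y` is also fixed by `N`. If `x = w₁ h₁ x + w₂ h₂ x` and `y` is a common fixed point, then
`x - y = w₁ (h₁ x - y) + w₂ (h₂ x - y)` is a proper convex combination of two vectors of norm at most
`‖x - y‖` which itself has norm `‖x - y‖`; by strict convexity of the norm the two vectors coincide,
so `h₁ x = h₂ x`, and then both equal `x`.
-/

open Function

theorem averaged_apply_eq_self_iff {E : Type*} [AddCommGroup E] [Module ℝ E] {h N : E → E} {c : ℝ}
    (hc : c ≠ 0) (hh : ∀ x, h x = (1 - c) • x + c • N x) (x : E) :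
    h x = x ↔ N x = x := by
  have hdiff : h x - x = c • (N x - x) := by rw [hh x]; module
  rw [← sub_eq_zero, hdiff, smul_eq_zero, sub_eq_zero, or_iff_right hc]

theorem norm_averaged_sub_le {E : Type*} [NormedAddCommGroup E] [NormedSpace ℝ E]
    {h N : E → E} {c : ℝ} (hc : c ∈ Set.Ioo (0 : ℝ) 1)
    (hN : ∀ x y : E, ‖N x - N y‖ ≤ ‖x - y‖) (hh : ∀ x, h x = (1 - c) • x + c • N x)
    {y : E} (hy : h y = y) (x : E) :
    ‖h x - y‖ ≤ ‖x - y‖ := by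
  obtain ⟨hc₀, hc₁⟩ := hc
  have hNy : N y = y := (averaged_apply_eq_self_iff hc₀.ne' hh y).1 hy
  have hdecomp : h x - y = (1 - c) • (x - y) + c • (N x - N y) := by rw [hh x, hNy]; module
  calc ‖h x - y‖ ≤ (1 - c) * ‖x - y‖ + c * ‖N x - N y‖ := by
        rw [hdecomp]
        refine (norm_add_le _ _).trans_eq ?_
        rw [norm_smul, norm_smul, Real.norm_of_nonneg (by linarith), Real.norm_of_nonneg hc₀.le]
    _ ≤ (1 - c) * ‖x - y‖ + c * ‖x - y‖ := by gcongr; exact hN x y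
    _ = ‖x - y‖ := by ring

theorem fixedPoints_smul_add_smul_eq_inter {E : Type*} [NormedAddCommGroup E] [NormedSpace ℝ E]
    [StrictConvexSpace ℝ E] {f g : E → E} {y : E} (hf : ∀ x, ‖f x - y‖ ≤ ‖x - y‖)
    (hg : ∀ x, ‖g x - y‖ ≤ ‖x - y‖) {a b : ℝ} (ha : 0 < a) (hb : 0 < b) (hab : a + b = 1) :
    fixedPoints (fun x => a • f x + b • g x) = fixedPoints f ∩ fixedPoints g := by
  ext x
  simp only [Set.mem_inter_iff, mem_fixedPoints_iff]
  refine ⟨fun hx => ?_, fun ⟨hfx, hgx⟩ => by rw [hfx, hgx, ← add_smul, hab, one_smul]⟩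
  have hcombo : a • (f x - y) + b • (g x - y) = x - y := by
    calc a • (f x - y) + b • (g x - y) = a • f x + b • g x - (a + b) • y := by module
      _ = x - y := by rw [hx, hab, one_smul]
  have hfg : f x = g x := by
    by_contra hne
    have hlt := norm_combo_lt_of_ne (hf x) (hg x) (sub_left_injective.ne hne) ha hb hab
    exact hlt.ne (congrArg norm hcombo)
  have hfx : f x = x := by rwa [← hfg, ← add_smul, hab, one_smul] at hx
  exact ⟨hfx, hfg ▸ hfx⟩

theorem fixedPoints_convexCombination_of_averaged_general
    {H : Type*} [NormedAddCommGroup H] [InnerProductSpace ℝ H]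
    (h₁ h₂ : H → H) (w₁ w₂ : ℝ) (hw₁ : w₁ ∈ Set.Ioo (0 : ℝ) 1) (hw₂ : w₂ ∈ Set.Ioo (0 : ℝ) 1)
    (hw : w₁ + w₂ = 1)
    (H₁ : ∃ c ∈ Set.Ioo (0 : ℝ) 1, ∃ N : H → H, (∀ x y : H, ‖N x - N y‖ ≤ ‖x - y‖) ∧
      ∀ x : H, h₁ x = (1 - c) • x + c • N x)
    (H₂ : ∃ c ∈ Set.Ioo (0 : ℝ) 1, ∃ N : H → H, (∀ x y : H, ‖N x - N y‖ ≤ ‖x - y‖) ∧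
      ∀ x : H, h₂ x = (1 - c) • x + c • N x)
    (hfix : (Function.fixedPoints h₁ ∩ Function.fixedPoints h₂).Nonempty) :
    Function.fixedPoints (fun x => w₁ • h₁ x + w₂ • h₂ x) =
      Function.fixedPoints h₁ ∩ Function.fixedPoints h₂ := by
  obtain ⟨y, hy₁, hy₂⟩ := hfix
  obtain ⟨c₁, hc₁, N₁, hN₁, hh₁⟩ := H₁
  obtain ⟨c₂, hc₂, N₂, hN₂, hh₂⟩ := H₂
  exact fixedPoints_smul_add_smul_eq_inter (norm_averaged_sub_le hc₁ hN₁ hh₁ hy₁)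
    (norm_averaged_sub_le hc₂ hN₂ hh₂ hy₂) hw₁.1 hw₂.1 hw

/-- If `h₁` and `h₂` are averaged operators with `Fix(h₁) ∩ Fix(h₂) ≠ ∅` and
`w₁, w₂ ∈ (0,1)` with `w₁ + w₂ = 1`, then `Fix(w₁ h₁ + w₂ h₂) = Fix(h₁) ∩ Fix(h₂)`. -/
theorem fixedPoints_convexCombination_of_averaged
    {H : Type*} [NormedAddCommGroup H] [InnerProductSpace ℝ H] [CompleteSpace H]
    (h₁ h₂ : H → H) (w₁ w₂ : ℝ) (hw₁ : w₁ ∈ Set.Ioo (0 : ℝ) 1) (hw₂ : w₂ ∈ Set.Ioo (0 : ℝ) 1)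
    (hw : w₁ + w₂ = 1)
    (H₁ : ∃ c ∈ Set.Ioo (0 : ℝ) 1, ∃ N : H → H, (∀ x y : H, ‖N x - N y‖ ≤ ‖x - y‖) ∧
      ∀ x : H, h₁ x = (1 - c) • x + c • N x)
    (H₂ : ∃ c ∈ Set.Ioo (0 : ℝ) 1, ∃ N : H → H, (∀ x y : H, ‖N x - N y‖ ≤ ‖x - y‖) ∧
      ∀ x : H, h₂ x = (1 - c) • x + c • N x)
    (hfix : (Function.fixedPoints h₁ ∩ Function.fixedPoints h₂).Nonempty) :
    Function.fixedPoints (fun x => w₁ • h₁ x + w₂ • h₂ x) =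
      Function.fixedPoints h₁ ∩ Function.fixedPoints h₂ :=
  fixedPoints_convexCombination_of_averaged_general h₁ h₂ w₁ w₂ hw₁ hw₂ hw H₁ H₂ hfix
end

section
/- Every averaged operator on a real Hilbert space is strongly nonexpansive: it is nonexpansive, and whenever sequences {x^k}, {y^k} satisfy that {x^k - y^k} is bounded and ‖x^k - y^k‖ - ‖h(x^k) - h(y^k)‖ → 0, it follows that (x^k - y^k) - (h(x^k) - h(y^k)) → 0 strongly. -/
open Filter Topology

private lemma avg_norm_sq {H : Type*} [NormedAddCommGroup H] [InnerProductSpace ℝ H]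
    (c : ℝ) (u v : H) :
    ‖(1 - c) • u + c • v‖ ^ 2 =
      (1 - c) * ‖u‖ ^ 2 + c * ‖v‖ ^ 2 - c * (1 - c) * ‖u - v‖ ^ 2 := by
  simp only [@norm_add_sq_real, @norm_sub_sq_real, norm_smul, real_inner_smul_left,
    real_inner_smul_right, mul_pow, Real.norm_eq_abs, sq_abs]
  ring

/-- Every averaged operator on a real Hilbert space is strongly nonexpansive. -/
theorem averaged_stronglyNonexpansive
    {H : Type*} [NormedAddCommGroup H] [InnerProductSpace ℝ H] [CompleteSpace H]
    (h : H → H)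
    (hav : ∃ c ∈ Set.Ioo (0 : ℝ) 1, ∃ N : H → H, (∀ x y : H, ‖N x - N y‖ ≤ ‖x - y‖) ∧
      ∀ x : H, h x = (1 - c) • x + c • N x) :
    (∀ x y : H, ‖h x - h y‖ ≤ ‖x - y‖) ∧
      ∀ x y : ℕ → H, (∃ M : ℝ, ∀ k : ℕ, ‖x k - y k‖ ≤ M) →
        Tendsto (fun k => ‖x k - y k‖ - ‖h (x k) - h (y k)‖) atTop (𝓝 0) →
        Tendsto (fun k => (x k - y k) - (h (x k) - h (y k))) atTop (𝓝 0) := by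
  obtain ⟨c, ⟨hc0, hc1⟩, N, hN, hrep⟩ := hav
  have hdiff : ∀ x y : H, h x - h y = (1 - c) • (x - y) + c • (N x - N y) := by
    intro x y
    rw [hrep x, hrep y]
    simp [smul_sub]
    abel
  have hnonexp : ∀ x y : H, ‖h x - h y‖ ≤ ‖x - y‖ := by
    intro x y
    rw [hdiff]
    calc ‖(1 - c) • (x - y) + c • (N x - N y)‖
        ≤ ‖(1 - c) • (x - y)‖ + ‖c • (N x - N y)‖ := norm_add_le _ _
      _ = (1 - c) * ‖x - y‖ + c * ‖N x - N y‖ := by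
          rw [norm_smul, norm_smul, Real.norm_eq_abs, Real.norm_eq_abs,
            abs_of_pos hc0, abs_of_pos (by linarith : (0:ℝ) < 1 - c)]
      _ ≤ (1 - c) * ‖x - y‖ + c * ‖x - y‖ := by
          have := hN x y; nlinarith
      _ = ‖x - y‖ := by ring
  refine ⟨hnonexp, ?_⟩
  intro x y ⟨M, hM⟩ htend
  have hM0 : 0 ≤ M := le_trans (norm_nonneg _) (hM 0)
  -- key squared bound
  have key : ∀ k, ‖(x k - y k) - (N (x k) - N (y k))‖ ^ 2 ≤
      (2 * M / (c * (1 - c))) * (‖x k - y k‖ - ‖h (x k) - h (y k)‖) := by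
    intro k
    set a := x k - y k with ha
    set b := N (x k) - N (y k) with hb
    have hid : ‖h (x k) - h (y k)‖ ^ 2 =
        (1 - c) * ‖a‖ ^ 2 + c * ‖b‖ ^ 2 - c * (1 - c) * ‖a - b‖ ^ 2 := by
      rw [hdiff]; exact avg_norm_sq c a b
    have hba : ‖b‖ ≤ ‖a‖ := hN (x k) (y k)
    have haM : ‖a‖ ≤ M := hM k
    have hhd : ‖h (x k) - h (y k)‖ ≤ ‖a‖ := hnonexp (x k) (y k)
    have hhd0 : 0 ≤ ‖h (x k) - h (y k)‖ := norm_nonneg _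
    have hcc : 0 < c * (1 - c) := mul_pos hc0 (by linarith)
    rw [div_mul_eq_mul_div, le_div_iff₀ hcc]
    have h1 : 0 ≤ c * ((‖a‖ - ‖b‖) * (‖a‖ + ‖b‖)) :=
      mul_nonneg hc0.le (mul_nonneg (by linarith) (by positivity))
    have h2 : 0 ≤ (‖a‖ - ‖h (x k) - h (y k)‖) * (2 * M - (‖a‖ + ‖h (x k) - h (y k)‖)) :=
      mul_nonneg (by linarith) (by linarith)
    nlinarith [h1, h2]
  -- norm of difference tends to 0
  have hsq : Tendsto (fun k => ‖(x k - y k) - (N (x k) - N (y k))‖ ^ 2) atTop (𝓝 0) := by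
    have hub : Tendsto (fun k => (2 * M / (c * (1 - c))) *
        (‖x k - y k‖ - ‖h (x k) - h (y k)‖)) atTop (𝓝 0) := by
      simpa using htend.const_mul (2 * M / (c * (1 - c)))
    exact squeeze_zero (fun k => sq_nonneg _) key hub
  have hnorm : Tendsto (fun k => ‖(x k - y k) - (N (x k) - N (y k))‖) atTop (𝓝 0) := by
    have := hsq.sqrt
    simpa [Real.sqrt_sq (norm_nonneg _), Real.sqrt_zero] using this
  -- conclude
  have heq : ∀ k, (x k - y k) - (h (x k) - h (y k)) =
      c • ((x k - y k) - (N (x k) - N (y k))) := by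
    intro k
    rw [hdiff]
    rw [smul_sub]
    have : (1 - c) • (x k - y k) + c • (x k - y k) = (x k - y k) := by
      rw [← add_smul]; simp
    module
  rw [tendsto_zero_iff_norm_tendsto_zero]
  simp only [heq, norm_smul, Real.norm_eq_abs, abs_of_pos hc0]
  simpa using hnorm.const_mul c
end

section
/- Let C₀,...,C_{m-1} ⊆ H be nonempty closed convex sets with nonempty interior of their intersection, and let 2 ≤ r ≤ m-1. Then the fixed point set of the r-sets-Douglas-Rachford operator T_{C₀,...,C_{r-1}} = (1/2)(Id + R_{C_{r-1}}...R_{C₀}) equals ∩_{i=0}^{r-1} C_i. -/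
/-!
Each reflection `R_C = 2P_C - Id` is quasi-nonexpansive with respect to every point `z ∈ C`:
`‖R_C y - z‖² = ‖y - z‖² - 4⟪y - P_C y, P_C y - z⟫` and the inner product is nonnegative by the
variational characterisation of the projection. If `z` is moreover an interior point of `C`, then
pushing `z` a little in the direction `y - P_C y` shows that equality forces `P_C y = y`. Hence for
`z` in the interior of `⋂ C_i`, along the orbit `x, R₀x, R₁R₀x, …` the distance to `z` can only
decrease; if `R_{r-1} ⋯ R₀ x = x` it must stay constant, so every reflection fixes `x` and
`x ∈ C_i` for all `i < r`.
-/

open RealInnerProductSpace Filter Topology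

section FoldFixedPoints

variable {α β : Type*} {f : ℕ → α → α} {n : ℕ} {x : α}

theorem foldl_eq_self_of_forall_eq_self (h : ∀ k < n, f k x = x) :
    Fin.foldl n (fun y (i : Fin n) => f i y) x = x := by
  induction n with
  | zero => rfl
  | succ n ih =>
    rw [Fin.foldl_succ_last]
    simp only [Fin.val_last, Fin.val_castSucc]
    rw [ih fun k hk => h k (by omega), h n n.lt_succ_self]

theorem map_foldl_le [Preorder β] (φ : α → β) (h : ∀ k < n, ∀ y, φ (f k y) ≤ φ y) :
    φ (Fin.foldl n (fun y (i : Fin n) => f i y) x) ≤ φ x := by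
  induction n with
  | zero => exact le_rfl
  | succ n ih =>
    rw [Fin.foldl_succ_last]
    simp only [Fin.val_last, Fin.val_castSucc]
    exact (h n n.lt_succ_self _).trans (ih fun k hk => h k (by omega))

theorem forall_eq_self_of_foldl_eq_self [PartialOrder β] (φ : α → β)
    (hle : ∀ k < n, ∀ y, φ (f k y) ≤ φ y) (hstrict : ∀ k < n, ∀ y, φ (f k y) = φ y → f k y = y)
    (hfix : Fin.foldl n (fun y (i : Fin n) => f i y) x = x) : ∀ k < n, f k x = x := by
  induction n with
  | zero => intro k hk; omega
  | succ n ih =>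
    rw [Fin.foldl_succ_last] at hfix
    simp only [Fin.val_last, Fin.val_castSucc] at hfix
    set y := Fin.foldl n (fun y (i : Fin n) => f i y) x
    have hle' : ∀ k < n, ∀ y, φ (f k y) ≤ φ y := fun k hk => hle k (by omega)
    have hkeep : φ (f n y) = φ y :=
      le_antisymm (hle n n.lt_succ_self y) (hfix ▸ map_foldl_le φ hle')
    have hy : y = x := (hstrict n n.lt_succ_self y hkeep).symm.trans hfix
    intro k hk
    rcases Nat.lt_succ_iff_lt_or_eq.mp hk with hk | rfl
    · exact ih hle' (fun k hk => hstrict k (by omega)) hy k hk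
    · rwa [hy] at hfix

end FoldFixedPoints

section NearestPoint

variable {H : Type*} [NormedAddCommGroup H] {C : Set H} {y p z : H}

def IsNearestPoint (C : Set H) (y p : H) : Prop :=
  p ∈ C ∧ ∀ w ∈ C, ‖y - p‖ ≤ ‖y - w‖

theorem IsNearestPoint.eq_of_mem (hp : IsNearestPoint C y p) (hy : y ∈ C) : p = y := by
  have h := hp.2 y hy
  rw [sub_self, norm_zero, norm_le_zero_iff, sub_eq_zero] at h
  exact h.symm

variable [InnerProductSpace ℝ H]

theorem IsNearestPoint.inner_le_zero (hC : Convex ℝ C) (hp : IsNearestPoint C y p) {w : H}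
    (hw : w ∈ C) : ⟪y - p, w - p⟫ ≤ 0 := by
  have : Nonempty C := ⟨⟨p, hp.1⟩⟩
  refine (norm_eq_iInf_iff_real_inner_le_zero hC hp.1).mp ?_ w hw
  refine le_antisymm (le_ciInf fun w => hp.2 w w.2) (ciInf_le ?_ (⟨p, hp.1⟩ : C))
  exact ⟨0, by rintro _ ⟨w, rfl⟩; exact norm_nonneg _⟩

theorem norm_reflect_sub_sq (y p z : H) :
    ‖(2 : ℝ) • p - y - z‖ ^ 2 = ‖y - z‖ ^ 2 - 4 * ⟪y - p, p - z⟫ := by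
  have h1 : (2 : ℝ) • p - y - z = (p - z) - (y - p) := by rw [two_smul]; abel
  have h2 : y - z = (y - p) + (p - z) := by abel
  rw [h1, h2, norm_sub_sq_real, norm_add_sq_real, real_inner_comm (p - z) (y - p)]
  ring

theorem IsNearestPoint.inner_sub_nonneg (hC : Convex ℝ C) (hp : IsNearestPoint C y p)
    (hz : z ∈ C) : 0 ≤ ⟪y - p, p - z⟫ := by
  have h := hp.inner_le_zero hC hz
  rw [← neg_sub p z, inner_neg_right] at h
  linarith

theorem IsNearestPoint.norm_reflect_sub_le (hC : Convex ℝ C) (hp : IsNearestPoint C y p)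
    (hz : z ∈ C) : ‖(2 : ℝ) • p - y - z‖ ≤ ‖y - z‖ := by
  refine (pow_le_pow_iff_left₀ (norm_nonneg _) (norm_nonneg _) two_ne_zero).mp ?_
  rw [norm_reflect_sub_sq]
  linarith [hp.inner_sub_nonneg hC hz]

theorem IsNearestPoint.eq_of_norm_reflect_sub_eq (hC : Convex ℝ C) (hp : IsNearestPoint C y p)
    (hz : z ∈ interior C) (heq : ‖(2 : ℝ) • p - y - z‖ = ‖y - z‖) : p = y := by
  have horth : ⟪y - p, p - z⟫ = 0 := by
    have h := congrArg (· ^ 2) heq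
    simp only [norm_reflect_sub_sq] at h
    linarith
  have hnear : ∀ᶠ t in 𝓝 (0 : ℝ), z + t • (y - p) ∈ C := by
    have hcont : Tendsto (fun t : ℝ => z + t • (y - p)) (𝓝 0) (𝓝 z) := by
      simpa using ((tendsto_id (x := 𝓝 (0 : ℝ))).smul_const (y - p)).const_add z
    exact hcont (mem_interior_iff_mem_nhds.mp hz)
  -- Moving `z` towards `y - p` inside `C` gives `t ‖y - p‖² ≤ ⟪y - p, p - z⟫ = 0`.
  obtain ⟨t, hmem, ht⟩ := ((hnear.filter_mono nhdsWithin_le_nhds).and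
    (self_mem_nhdsWithin : ∀ᶠ t in 𝓝[>] (0 : ℝ), 0 < t)).exists
  have h := hp.inner_sub_nonneg hC hmem
  rw [show p - (z + t • (y - p)) = (p - z) - t • (y - p) by abel, inner_sub_right, horth,
    real_inner_smul_right, real_inner_self_eq_norm_sq] at h
  have hyp : ‖y - p‖ ^ 2 = 0 := le_antisymm (by nlinarith) (sq_nonneg _)
  rw [pow_eq_zero_iff two_ne_zero, norm_eq_zero, sub_eq_zero] at hyp
  exact hyp.symm

end NearestPoint

theorem reflect_eq_self_iff {E : Type*} [AddCommGroup E] [Module ℝ E] {p y : E} :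
    (2 : ℝ) • p - y = y ↔ p = y := by
  rw [sub_eq_iff_eq_add, ← two_smul ℝ y]
  exact (smul_right_injective E two_ne_zero).eq_iff

theorem half_smul_add_eq_self_iff {E : Type*} [AddCommGroup E] [Module ℝ E] {x y : E} :
    (1 / 2 : ℝ) • (x + y) = x ↔ y = x := by
  rw [← (smul_right_injective E (two_ne_zero' ℝ)).eq_iff, smul_smul]
  norm_num [two_smul]

theorem fixedPoints_rSetsDR_general
    {H : Type*} [NormedAddCommGroup H] [InnerProductSpace ℝ H]
    (m r : ℕ) (hrm : r ≤ m - 1)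
    (C : ℕ → Set H)
    (hcv : ∀ i < m, Convex ℝ (C i))
    (hint : (interior (⋂ i ∈ Finset.range m, C i)).Nonempty)
    (P : ℕ → H → H)
    (hP : ∀ i < m, ∀ x : H, P i x ∈ C i ∧ ∀ y ∈ C i, ‖x - P i x‖ ≤ ‖x - y‖)
    (T : H → H)
    (hT : ∀ x : H,
      T x = (1 / 2 : ℝ) • (x + Fin.foldl r (fun y (i : Fin r) => (2 : ℝ) • P i.val y - y) x)) :
    Function.fixedPoints T = ⋂ i ∈ Finset.range r, C i := by
  have hm : ∀ k < r, k < m := fun k hk => by omega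
  have hnear : ∀ k < r, ∀ y, IsNearestPoint (C k) y (P k y) := fun k hk => hP k (hm k hk)
  obtain ⟨z, hz⟩ := hint
  have hzC : ∀ k < r, z ∈ interior (C k) := fun k hk =>
    interior_mono (Set.biInter_subset_of_mem (Finset.mem_coe.2 (Finset.mem_range.2 (hm k hk)))) hz
  ext x
  simp only [Function.mem_fixedPoints, Function.IsFixedPt, hT, half_smul_add_eq_self_iff,
    Set.mem_iInter₂, Finset.mem_range]
  constructor
  · intro hfix k hk
    have hRk := forall_eq_self_of_foldl_eq_self (f := fun k y => (2 : ℝ) • P k y - y)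
      (fun y => ‖y - z‖)
      (fun k hk y => (hnear k hk y).norm_reflect_sub_le (hcv k (hm k hk))
        (interior_subset (hzC k hk)))
      (fun k hk y heq => reflect_eq_self_iff.mpr
        ((hnear k hk y).eq_of_norm_reflect_sub_eq (hcv k (hm k hk)) (hzC k hk) heq))
      hfix k hk
    exact reflect_eq_self_iff.mp hRk ▸ (hnear k hk x).1
  · intro hx
    exact foldl_eq_self_of_forall_eq_self (f := fun k y => (2 : ℝ) • P k y - y) fun k hk =>
      reflect_eq_self_iff.mpr ((hnear k hk x).eq_of_mem (hx k hk))

/-- Let `C₀, …, C_{m-1}` be nonempty closed convex sets whose intersection has nonempty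
interior, and `2 ≤ r ≤ m - 1`. Then the fixed point set of the `r`-sets-Douglas–Rachford
operator `T = (1/2)(Id + R_{C_{r-1}} ⋯ R_{C₀})` equals `⋂_{i=0}^{r-1} C_i`. -/
theorem fixedPoints_rSetsDR
    {H : Type*} [NormedAddCommGroup H] [InnerProductSpace ℝ H] [CompleteSpace H]
    (m r : ℕ) (hr : 2 ≤ r) (hrm : r ≤ m - 1)
    (C : ℕ → Set H)
    (hne : ∀ i < m, (C i).Nonempty) (hcl : ∀ i < m, IsClosed (C i))
    (hcv : ∀ i < m, Convex ℝ (C i))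
    (hint : (interior (⋂ i ∈ Finset.range m, C i)).Nonempty)
    (P : ℕ → H → H)
    (hP : ∀ i < m, ∀ x : H, P i x ∈ C i ∧ ∀ y ∈ C i, ‖x - P i x‖ ≤ ‖x - y‖)
    (T : H → H)
    (hT : ∀ x : H,
      T x = (1 / 2 : ℝ) • (x + Fin.foldl r (fun y (i : Fin r) => (2 : ℝ) • P i.val y - y) x)) :
    Function.fixedPoints T = ⋂ i ∈ Finset.range r, C i :=
  fixedPoints_rSetsDR_general m r hrm C hcv hint P hP T hT
end

section
/- If int(∩_{i=0}^{r-1} C_i) ≠ ∅, then Fix(V_{C₀,...,C_{r-1}}) = ∩_{i=0}^{r-1} Fix(R_{C_i}) = ∩_{i=0}^{r-1} C_i, where V_{C₀,...,C_{r-1}} = R_{C_{r-1}} ∘ ... ∘ R_{C₀}. -/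
/-!
A reflection `R_C = 2 P_C - Id` through a convex set moves no point farther from any point
of `C`. Hence along the orbit `x, R₀ x, R₁ R₀ x, …` of a fixed point `x` of `V` the distance to
any `w ∈ ⋂ C_i` can never increase, and since the orbit returns to `x` it is constant.
So `R₀ x` and `x` are equidistant from every point of a set with nonempty interior,
which in an inner product space forces `R₀ x = x`; iterate.
-/

open scoped RealInnerProductSpace

section Reflection

variable {H : Type*} [NormedAddCommGroup H] {s : Set H} {x p : H}

theorem eq_iff_mem_of_forall_norm_sub_le (hp : p ∈ s) (hmin : ∀ y ∈ s, ‖x - p‖ ≤ ‖x - y‖) :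
    p = x ↔ x ∈ s := by
  refine ⟨fun h => h ▸ hp, fun hx => ?_⟩
  have : ‖x - p‖ ≤ 0 := by simpa using hmin x hx
  exact (sub_eq_zero.mp (norm_le_zero_iff.mp this)).symm

variable [InnerProductSpace ℝ H]

theorem inner_sub_le_zero_of_forall_norm_sub_le (hs : Convex ℝ s) (hp : p ∈ s)
    (hmin : ∀ y ∈ s, ‖x - p‖ ≤ ‖x - y‖) : ∀ w ∈ s, ⟪x - p, w - p⟫ ≤ 0 := by
  have hleast : IsLeast (Set.range fun w : s => ‖x - w‖) ‖x - p‖ :=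
    ⟨⟨⟨p, hp⟩, rfl⟩, by rintro _ ⟨w, rfl⟩; exact hmin w w.2⟩
  exact (norm_eq_iInf_iff_real_inner_le_zero hs hp).mp hleast.csInf_eq.symm

theorem two_smul_sub_eq_self_iff : (2 : ℝ) • p - x = x ↔ p = x := by
  rw [sub_eq_iff_eq_add, ← two_smul ℝ x]
  exact (smul_right_injective H two_ne_zero).eq_iff

theorem norm_two_smul_sub_sub_le (hs : Convex ℝ s) (hp : p ∈ s)
    (hmin : ∀ y ∈ s, ‖x - p‖ ≤ ‖x - y‖) {w : H} (hw : w ∈ s) :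
    ‖(2 : ℝ) • p - x - w‖ ≤ ‖x - w‖ := by
  have hvar := inner_sub_le_zero_of_forall_norm_sub_le hs hp hmin w hw
  have hsq : ‖x - w‖ ^ 2 = ‖(2 : ℝ) • p - x - w‖ ^ 2 - 4 * ⟪x - p, w - p⟫ := by
    have h₁ : x - w = (x - p) - (w - p) := by abel
    have h₂ : (2 : ℝ) • p - x - w = -(x - p) - (w - p) := by module
    rw [h₁, h₂]
    generalize x - p = a, w - p = b
    rw [norm_sub_sq_real, norm_sub_sq_real, norm_neg, inner_neg_left]
    ring
  exact (pow_le_pow_iff_left₀ (norm_nonneg _) (norm_nonneg _) two_ne_zero).mp (by linarith)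

end Reflection

section Composition

variable {P : Type*} [MetricSpace P]

theorem eq_of_forall_dist_eq_of_nonempty_interior {V : Type*} [NormedAddCommGroup V]
    [InnerProductSpace ℝ V] [NormedAddTorsor V P] {s : Set P} (hs : (interior s).Nonempty)
    {a b : P} (h : ∀ w ∈ s, dist a w = dist b w) : a = b := by
  rw [← AffineSubspace.perpBisector_eq_top, eq_top_iff, ← isOpen_interior.affineSpan_eq_top hs]
  exact affineSpan_le.mpr fun w hw =>
    AffineSubspace.mem_perpBisector_iff_dist_eq'.mpr (h w (interior_subset hw))

variable {ι : Type*} {f : ι → P → P} {s : Set P}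

theorem List.dist_foldl_le (hf : ∀ i y, ∀ w ∈ s, dist (f i y) w ≤ dist y w) (L : List ι) (y : P)
    {w : P} (hw : w ∈ s) : dist (L.foldl (fun y i => f i y) y) w ≤ dist y w := by
  induction L generalizing y with
  | nil => exact le_rfl
  | cons i L ih => exact (ih (f i y)).trans (hf i y w hw)

theorem List.foldl_eq_self_iff {V : Type*} [NormedAddCommGroup V] [InnerProductSpace ℝ V]
    [NormedAddTorsor V P] (hs : (interior s).Nonempty)
    (hf : ∀ i y, ∀ w ∈ s, dist (f i y) w ≤ dist y w) (L : List ι) (x : P) :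
    L.foldl (fun y i => f i y) x = x ↔ ∀ i ∈ L, f i x = x := by
  induction L with
  | nil => simp
  | cons i L ih =>
    rw [List.foldl_cons, List.forall_mem_cons]
    by_cases hi : f i x = x
    · simp only [hi, ih, true_and]
    · refine iff_of_false (fun hfix => hi ?_) (fun h => hi h.1)
      -- the orbit returns to `x`, so neither step can have brought it closer to any `w ∈ s`
      refine eq_of_forall_dist_eq_of_nonempty_interior hs fun w hw => le_antisymm (hf i x w hw) ?_
      calc dist x w = dist (L.foldl (fun y i => f i y) (f i x)) w := by rw [hfix]
        _ ≤ dist (f i x) w := List.dist_foldl_le hf L _ hw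

end Composition

theorem fixedPoints_composite_reflections_general
    {H : Type*} [NormedAddCommGroup H] [InnerProductSpace ℝ H]
    (r : ℕ) (C : Fin r → Set H)
    (hcv : ∀ i, Convex ℝ (C i))
    (hint : (interior (⋂ i, C i)).Nonempty)
    (P : Fin r → H → H)
    (hP : ∀ i, ∀ x : H, P i x ∈ C i ∧ ∀ y ∈ C i, ‖x - P i x‖ ≤ ‖x - y‖)
    (V : H → H) (hV : ∀ x : H, V x = Fin.foldl r (fun y i => (2 : ℝ) • P i y - y) x) :
    Function.fixedPoints V = ⋂ i, Function.fixedPoints (fun x => (2 : ℝ) • P i x - x) ∧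
      (⋂ i, Function.fixedPoints (fun x => (2 : ℝ) • P i x - x)) = ⋂ i, C i := by
  have hdist : ∀ i x, ∀ w ∈ ⋂ i, C i, dist ((2 : ℝ) • P i x - x) w ≤ dist x w := fun i x w hw => by
    simpa only [dist_eq_norm] using
      norm_two_smul_sub_sub_le (hcv i) (hP i x).1 (hP i x).2 (Set.mem_iInter.mp hw i)
  have hfix : ∀ i x, (2 : ℝ) • P i x - x = x ↔ x ∈ C i := fun i x =>
    two_smul_sub_eq_self_iff.trans (eq_iff_mem_of_forall_norm_sub_le (hP i x).1 (hP i x).2)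
  constructor
  · ext x
    simp only [Function.mem_fixedPoints, Function.IsFixedPt, Set.mem_iInter, hV,
      Fin.foldl_eq_foldl_finRange, List.foldl_eq_self_iff hint hdist, List.mem_finRange, true_imp_iff]
  · ext x
    simp only [Set.mem_iInter, Function.mem_fixedPoints, Function.IsFixedPt, hfix]

/-- If `int(⋂_{i=0}^{r-1} C_i) ≠ ∅`, then
`Fix(V_{C₀,…,C_{r-1}}) = ⋂ Fix(R_{C_i}) = ⋂ C_i`, where `V = R_{C_{r-1}} ∘ ⋯ ∘ R_{C₀}`. -/
theorem fixedPoints_composite_reflections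
    {H : Type*} [NormedAddCommGroup H] [InnerProductSpace ℝ H] [CompleteSpace H]
    (r : ℕ) (hr : 2 ≤ r) (C : Fin r → Set H)
    (hne : ∀ i, (C i).Nonempty) (hcl : ∀ i, IsClosed (C i)) (hcv : ∀ i, Convex ℝ (C i))
    (hint : (interior (⋂ i, C i)).Nonempty)
    (P : Fin r → H → H)
    (hP : ∀ i, ∀ x : H, P i x ∈ C i ∧ ∀ y ∈ C i, ‖x - P i x‖ ≤ ‖x - y‖)
    (V : H → H) (hV : ∀ x : H, V x = Fin.foldl r (fun y i => (2 : ℝ) • P i y - y) x) :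
    Function.fixedPoints V = ⋂ i, Function.fixedPoints (fun x => (2 : ℝ) • P i x - x) ∧
      (⋂ i, Function.fixedPoints (fun x => (2 : ℝ) • P i x - x)) = ⋂ i, C i :=
  fixedPoints_composite_reflections_general r C hcv hint P hP V hV
end

section
/- Let C₀,...,C_{m-1} be nonempty closed convex subsets of a real Hilbert space with ∩_{i=0}^{m-1} C_i ≠ ∅. Then Fix(P_{C₀} ∘ P_{C₁} ∘ ... ∘ P_{C_{m-1}}) = ∩_{i=0}^{m-1} C_i. -/
open RealInnerProductSpace

/-- Variational inequality for a minimizing projection. -/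
lemma proj_var_ineq {H : Type*} [NormedAddCommGroup H] [InnerProductSpace ℝ H]
    {C : Set H} (hcv : Convex ℝ C) {x p : H} (hpC : p ∈ C)
    (hmin : ∀ y ∈ C, ‖x - p‖ ≤ ‖x - y‖) :
    ∀ w ∈ C, ⟪x - p, w - p⟫ ≤ 0 := by
  haveI : Nonempty C := ⟨⟨p, hpC⟩⟩
  rw [← norm_eq_iInf_iff_real_inner_le_zero hcv hpC]
  refine le_antisymm (le_ciInf fun w => hmin w w.2)
    (ciInf_le ⟨0, fun _ ⟨_, h⟩ => h ▸ norm_nonneg _⟩ (⟨p, hpC⟩ : C))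

/-- Pythagoras-type inequality. -/
lemma proj_sq_ineq {H : Type*} [NormedAddCommGroup H] [InnerProductSpace ℝ H]
    {C : Set H} (hcv : Convex ℝ C) {x p : H} (hpC : p ∈ C)
    (hmin : ∀ y ∈ C, ‖x - p‖ ≤ ‖x - y‖) {z : H} (hz : z ∈ C) :
    ‖p - z‖ ^ 2 + ‖x - p‖ ^ 2 ≤ ‖x - z‖ ^ 2 := by
  have h := proj_var_ineq hcv hpC hmin z hz
  have e : x - z = (x - p) + (p - z) := by abel
  have := norm_add_sq_real (x - p) (p - z)
  rw [e, this]
  have : ⟪x - p, p - z⟫ = - ⟪x - p, z - p⟫ := by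
    rw [← inner_neg_right]; congr 1; abel
  nlinarith [h, this]

lemma foldr_contract {H : Type*} [NormedAddCommGroup H] [InnerProductSpace ℝ H]
    (m : ℕ) (f : Fin m → H → H) (z : H)
    (hf : ∀ i w, ‖f i w - z‖ ≤ ‖w - z‖) (x : H) :
    ‖Fin.foldr m f x - z‖ ≤ ‖x - z‖ := by
  induction m generalizing x with
  | zero => simp
  | succ n ih =>
    rw [Fin.foldr_succ]
    exact le_trans (hf 0 _) (ih _ (fun i w => hf i.succ w) x)



/-- For nonempty closed convex sets `C₀,…,C_{m-1}` with nonempty intersection,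
`Fix(P_{C₀} ∘ P_{C₁} ∘ ⋯ ∘ P_{C_{m-1}}) = ⋂_{i=0}^{m-1} C_i`. -/
theorem fixedPoints_comp_projections
    {H : Type*} [NormedAddCommGroup H] [InnerProductSpace ℝ H] [CompleteSpace H]
    (m : ℕ) (hm : 1 ≤ m) (C : Fin m → Set H)
    (hne : ∀ i, (C i).Nonempty) (hcl : ∀ i, IsClosed (C i)) (hcv : ∀ i, Convex ℝ (C i))
    (hint : (⋂ i, C i).Nonempty)
    (P : Fin m → H → H)
    (hP : ∀ i, ∀ x : H, P i x ∈ C i ∧ ∀ y ∈ C i, ‖x - P i x‖ ≤ ‖x - y‖) :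
    -- `Fin.foldr` applies `P (m-1)` first and `P 0` last, i.e. `P_{C₀} ∘ ⋯ ∘ P_{C_{m-1}}`
    Function.fixedPoints (fun x => Fin.foldr m (fun i y => P i y) x) = ⋂ i, C i := by
  obtain ⟨z, hz⟩ := hint
  simp only [Set.mem_iInter] at hz
  ext x
  simp only [Function.mem_fixedPoints, Function.IsFixedPt, Set.mem_iInter]
  constructor
  · -- hard direction
    clear hm hne hcl
    intro hfix
    induction m generalizing x with
    | zero => exact fun i => i.elim0
    | succ n ih =>
      rw [Fin.foldr_succ] at hfix
      set y := Fin.foldr n (fun i => P i.succ) x with hy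
      -- contraction toward z
      have hcon : ∀ (i : Fin (n+1)) w, ‖P i w - z‖ ≤ ‖w - z‖ := by
        intro i w
        have h := proj_sq_ineq (hcv i) (hP i w).1 (hP i w).2 (hz i)
        nlinarith [norm_nonneg (P i w - z), norm_nonneg (w - z), sq_nonneg ‖w - P i w‖]
      have hyz : ‖y - z‖ ≤ ‖x - z‖ :=
        foldr_contract n _ z (fun i w => hcon i.succ w) x
      have hsq : ‖x - z‖ ^ 2 + ‖y - x‖ ^ 2 ≤ ‖y - z‖ ^ 2 := by
        have := proj_sq_ineq (hcv 0) (hP 0 y).1 (hP 0 y).2 (hz 0)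
        rwa [hfix] at this
      have hyx : y = x := by
        have : ‖y - x‖ = 0 := by
          nlinarith [norm_nonneg (y - x), norm_nonneg (y - z), norm_nonneg (x - z)]
        rwa [norm_sub_eq_zero_iff] at this
      have hx0 : x ∈ C 0 := by
        rw [hyx] at hfix
        have := (hP 0 y).1
        rw [hyx] at this
        rwa [hfix] at this
      have hxs : ∀ i : Fin n, x ∈ C i.succ := by
        refine ih (fun i => C i.succ) (fun i => hcv i.succ)
          (fun i => P i.succ) (fun i w => hP i.succ w) (fun i => hz i.succ) x ?_
        rw [← hy, hyx]
      intro i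
      rcases Fin.eq_zero_or_eq_succ i with h0 | ⟨j, hj⟩
      · rw [h0]; exact hx0
      · rw [hj]; exact hxs j
  · intro hx
    have hfix : ∀ i : Fin m, P i x = x := by
      intro i
      have h := (hP i x).2 x (hx i)
      simp only [sub_self, norm_zero] at h
      have : ‖x - P i x‖ = 0 := le_antisymm h (norm_nonneg _)
      rw [norm_sub_eq_zero_iff] at this
      exact this.symm
    clear hm hne hcl hcv hP hx
    induction m with
    | zero => simp
    | succ n ih =>
      rw [Fin.foldr_succ, ih (fun i => C i.succ) (fun i => P i.succ)
        (fun i => hz i.succ) (fun i => hfix i.succ), hfix 0]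
end
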